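/- arXiv:1208.4153 — 13 statements merged into one kernel-verified Lean document; each statement's English description precedes it below -/
import Mathlib

section
/- Let G be a finite group, u ∈ G, n a positive integer, and a ∈ G such that (a·u⁻¹)ⁿ = aⁿ. Then aⁿ commutes with u (i.e., aⁿ lies in the centralizer of u). -/
theorem stmt_0 {G : Type*} [Group G] [Finite G] (u a : G) (n : ℕ) (hn : 0 < n)
    (h : (a * u⁻¹) ^ n = a ^ n) :
    a ^ n ∈ Subgroup.centralizer ({u} : Set G) := by
  rw [Subgroup.mem_centralizer_singleton_iff]
  have c1 : u⁻¹ * (a * u⁻¹) ^ n * u = (u⁻¹ * (a * u⁻¹) * u) ^ n := by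
    have := (conj_pow (a := u⁻¹) (b := a * u⁻¹) (i := n)).symm
    simpa using this
  have c2 : (a⁻¹ * (a * u⁻¹) * a) ^ n = a⁻¹ * (a * u⁻¹) ^ n * a := by
    have := conj_pow (a := a⁻¹) (b := a * u⁻¹) (i := n)
    simpa using this
  have key : u⁻¹ * a ^ n * u = a ^ n := by
    calc u⁻¹ * a ^ n * u = u⁻¹ * (a * u⁻¹) ^ n * u := by rw [h]
      _ = (u⁻¹ * (a * u⁻¹) * u) ^ n := c1
      _ = (a⁻¹ * (a * u⁻¹) * a) ^ n := by group
      _ = a⁻¹ * (a * u⁻¹) ^ n * a := c2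
      _ = a⁻¹ * a ^ n * a := by rw [h]
      _ = a ^ n := by group
  calc a ^ n * u = u * (u⁻¹ * a ^ n * u) := by group
    _ = u * a ^ n := by rw [key]
end

section
/- Let G be a finite group, u, g ∈ G, and n a positive integer. The map a ↦ u·a⁻¹ is a bijection from G_n(u, g) = {a ∈ G | (a·u⁻¹)ⁿ = aⁿ = g} to G_n(u, g⁻¹) = {a ∈ G | (a·u⁻¹)ⁿ = aⁿ = g⁻¹}, with inverse b ↦ b⁻¹·u. -/
private lemma comm_aux {G : Type*} [Group G] (u : G) (n : ℕ) {a : G}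
    (h : (a * u⁻¹) ^ n = a ^ n) : Commute u (a ^ n) := by
  set x := a * u⁻¹ with hx
  have hxu : x * u = a := by rw [hx]; group
  have h1 : (u * x) ^ n = u * (x * u) ^ n * u⁻¹ := by
    have e : u * x = u * (x * u) * u⁻¹ := by group
    rw [e, conj_pow]
  have h2 : (u * x) ^ n = x⁻¹ * (x * u) ^ n * x := by
    have e : u * x = x⁻¹ * (x * u) * x⁻¹⁻¹ := by group
    rw [e, conj_pow, inv_inv]
  rw [hxu] at h1 h2
  have h3 : u * a ^ n * u⁻¹ = x⁻¹ * a ^ n * x := h1.symm.trans h2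
  have h4 : x⁻¹ * a ^ n * x = a ^ n := by rw [← h]; group
  rw [h4] at h3
  show u * a ^ n = a ^ n * u
  calc u * a ^ n = u * a ^ n * u⁻¹ * u := by group
    _ = a ^ n * u := by rw [h3]

theorem stmt_1 {G : Type*} [Group G] [Finite G] (u g : G) (n : ℕ) (hn : 0 < n) :
    Set.BijOn (fun a => u * a⁻¹)
      {a : G | (a * u⁻¹) ^ n = a ^ n ∧ a ^ n = g}
      {a : G | (a * u⁻¹) ^ n = a ^ n ∧ a ^ n = g⁻¹} ∧
    Set.InvOn (fun b => b⁻¹ * u) (fun a => u * a⁻¹)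
      {a : G | (a * u⁻¹) ^ n = a ^ n ∧ a ^ n = g}
      {a : G | (a * u⁻¹) ^ n = a ^ n ∧ a ^ n = g⁻¹} := by
  have inv : Set.InvOn (fun b => b⁻¹ * u) (fun a => u * a⁻¹)
      {a : G | (a * u⁻¹) ^ n = a ^ n ∧ a ^ n = g}
      {a : G | (a * u⁻¹) ^ n = a ^ n ∧ a ^ n = g⁻¹} := by
    constructor <;> intro a _ <;> simp <;> group
  have maps1 : Set.MapsTo (fun a => u * a⁻¹)
      {a : G | (a * u⁻¹) ^ n = a ^ n ∧ a ^ n = g}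
      {a : G | (a * u⁻¹) ^ n = a ^ n ∧ a ^ n = g⁻¹} := by
    intro a ⟨h1, h2⟩
    have hc : Commute u g := h2 ▸ comm_aux u n h1
    have hb : (u * a⁻¹) ^ n = g⁻¹ := by
      have e : u * a⁻¹ = (a * u⁻¹)⁻¹ := by group
      rw [e, inv_pow, h1, h2]
    refine ⟨?_, hb⟩
    show (u * a⁻¹ * u⁻¹) ^ n = (u * a⁻¹) ^ n
    rw [hb, conj_pow, inv_pow, h2, hc.inv_right.eq]
    group
  have maps2 : Set.MapsTo (fun b => b⁻¹ * u)
      {a : G | (a * u⁻¹) ^ n = a ^ n ∧ a ^ n = g⁻¹}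
      {a : G | (a * u⁻¹) ^ n = a ^ n ∧ a ^ n = g} := by
    intro b ⟨h1, h2⟩
    have hc : Commute u g⁻¹ := h2 ▸ comm_aux u n h1
    have e2 : (b⁻¹ * u) ^ n = g := by
      have e : b⁻¹ * u = (u⁻¹ * (b * u⁻¹) * u⁻¹⁻¹)⁻¹ := by group
      rw [e, inv_pow, conj_pow, h1, h2, inv_inv, hc.inv_left.eq]
      group
    refine ⟨?_, e2⟩
    show (b⁻¹ * u * u⁻¹) ^ n = (b⁻¹ * u) ^ n
    have e : b⁻¹ * u * u⁻¹ = b⁻¹ := by group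
    rw [e, e2, inv_pow, h2, inv_inv]
  exact ⟨inv.bijOn maps1 maps2, inv⟩
end

section
/- Let G be a finite group of exponent e, n a positive integer, and d = gcd(n, e). Then for every u ∈ G, G_n(u) = G_d(u), where G_m(u) = {a ∈ G | (a·u⁻¹)ᵐ = aᵐ}. -/
namespace Monoid

variable {G : Type*} [Group G]

/-- Bézout: `gcd n e = n * gcdA n e + e * gcdB n e`, and `g ^ e = 1`. -/
theorem pow_gcd_exponent_eq_zpow (g : G) (n : ℕ) :
    g ^ n.gcd (exponent G) = (g ^ n) ^ n.gcdA (exponent G) := by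
  have bezout := Nat.gcd_eq_gcd_ab n (exponent G)
  have pow_exponent : g ^ (exponent G : ℤ) = 1 := by
    rw [zpow_natCast, pow_exponent_eq_one]
  rw [← zpow_natCast, bezout, zpow_add, zpow_mul, zpow_mul, pow_exponent, one_zpow, mul_one,
    zpow_natCast]

theorem pow_eq_pow_iff_pow_gcd_exponent_eq (x y : G) (n : ℕ) :
    x ^ n = y ^ n ↔ x ^ n.gcd (exponent G) = y ^ n.gcd (exponent G) := by
  constructor
  · intro h
    rw [pow_gcd_exponent_eq_zpow, pow_gcd_exponent_eq_zpow, h]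
  · intro h
    obtain ⟨k, hk⟩ := Nat.gcd_dvd_left n (exponent G)
    rw [hk, pow_mul, pow_mul, h]

end Monoid

theorem stmt_2_general {G : Type*} [Group G] (n : ℕ) (u : G) :
    {a : G | (a * u⁻¹) ^ n = a ^ n} =
      {a : G | (a * u⁻¹) ^ (n.gcd (Monoid.exponent G)) = a ^ (n.gcd (Monoid.exponent G))} :=
  Set.ext fun a => Monoid.pow_eq_pow_iff_pow_gcd_exponent_eq (a * u⁻¹) a n

theorem stmt_2 {G : Type*} [Group G] [Finite G] (n : ℕ) (hn : 0 < n) (u : G) :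
    {a : G | (a * u⁻¹) ^ n = a ^ n} =
      {a : G | (a * u⁻¹) ^ (n.gcd (Monoid.exponent G)) = a ^ (n.gcd (Monoid.exponent G))} :=
  stmt_2_general n u
end

section
/- Let G be a finite group, n a positive integer, u, g ∈ G commuting elements, and m an integer with gcd(m, |G|) = 1 and m ≡ 1 (mod n). Then the m-th power map a ↦ aᵐ is a bijection from G_n(u, g) to G_n(u, gᵐ). -/
/-!
Write `k = 1 + j n`. For `a` with `aⁿ = g` we get `aᵏ = a gʲ`, and `a u⁻¹` commutes with `g`,
so `(aᵏ u⁻¹)ⁿ = (a u⁻¹)ⁿ g^{jn} = gᵏ = (aⁿ)ᵏ`: every `k ≡ 1 (mod n)` maps `G_n(u, g)` into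
`G_n(u, gᵏ)`. Since `m` is coprime to `n |G|`, it has an inverse `s` modulo `n |G|`; then
`s ≡ 1 (mod n)`, so `b ↦ bˢ` maps `G_n(u, gᵐ)` back into `G_n(u, g)` and inverts `a ↦ aᵐ`.
-/

/-- The set `G_n(u, g)`. -/
def solutionSet {G : Type*} [Group G] (n : ℕ) (u g : G) : Set G :=
  {a : G | (a * u⁻¹) ^ n = a ^ n ∧ a ^ n = g}

theorem zpow_mem_solutionSet {G : Type*} [Group G] {n : ℕ} {u g a : G} (hug : Commute u g)
    {k : ℤ} (hk : k ≡ 1 [ZMOD n]) (ha : a ∈ solutionSet n u g) :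
    a ^ k ∈ solutionSet n u (g ^ k) := by
  obtain ⟨ha₁, ha₂⟩ := ha
  obtain ⟨j, hj⟩ := Int.modEq_iff_dvd.mp hk.symm
  have hkj : k = 1 + n * j := by linarith
  have hak : a ^ k = a * g ^ j := by
    rw [hkj, zpow_add, zpow_one, zpow_mul, zpow_natCast, ha₂]
  have hcomm : Commute (a * u⁻¹) (g ^ j) :=
    ((ha₂ ▸ Commute.self_pow a n).mul_left hug.inv_left).zpow_right j
  have hpow : (a ^ k) ^ n = g ^ k := by
    rw [← zpow_natCast, ← zpow_mul, mul_comm, zpow_mul, zpow_natCast, ha₂]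
  refine ⟨?_, hpow⟩
  calc (a ^ k * u⁻¹) ^ n = (a * u⁻¹ * g ^ j) ^ n := by
        rw [hak, mul_assoc, ← (hug.inv_left.zpow_right j).eq, ← mul_assoc]
    _ = (a * u⁻¹) ^ n * (g ^ j) ^ n := hcomm.mul_pow n
    _ = g ^ k := by
        rw [ha₁, ha₂, ← zpow_natCast, ← zpow_mul, ← zpow_one_add, mul_comm j, ← hkj]
    _ = (a ^ k) ^ n := hpow.symm

theorem zpow_eq_self_of_modEq_one {G : Type*} [Group G] (a : G) {k : ℤ}
    (hk : k ≡ 1 [ZMOD Nat.card G]) : a ^ k = a := by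
  rw [← zpow_mod_natCard, hk, zpow_mod_natCard, zpow_one]

theorem Int.exists_mul_modEq_one_and_modEq_one {m n N : ℤ} (hN : IsCoprime m N)
    (hm : m ≡ 1 [ZMOD n]) : ∃ s, s * m ≡ 1 [ZMOD N] ∧ s ≡ 1 [ZMOD n] := by
  obtain ⟨c, hc⟩ := Int.modEq_iff_dvd.mp hm.symm
  have hn : IsCoprime m n := ⟨1, -c, by linarith⟩
  obtain ⟨s, t, hst⟩ := hn.mul_right hN
  refine ⟨s, Int.modEq_iff_dvd.mpr ⟨t * n, ?_⟩,
    Int.modEq_iff_dvd.mpr ⟨s * c + t * N, ?_⟩⟩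
  · linear_combination -hst
  · linear_combination -hst + s * hc

theorem stmt_3_general {G : Type*} [Group G] (n : ℕ) (u g : G)
    (hug : u * g = g * u) (m : ℤ) (hm : Int.gcd m (Nat.card G) = 1)
    (hm1 : m ≡ 1 [ZMOD (n : ℤ)]) :
    Set.BijOn (fun a => a ^ m)
      {a : G | (a * u⁻¹) ^ n = a ^ n ∧ a ^ n = g}
      {a : G | (a * u⁻¹) ^ n = a ^ n ∧ a ^ n = g ^ m} := by
  obtain ⟨s, hsm, hs⟩ :=
    Int.exists_mul_modEq_one_and_modEq_one (Int.isCoprime_iff_gcd_eq_one.mpr hm) hm1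
  have hinv (x : G) : (x ^ m) ^ s = x := by
    rw [← zpow_mul, mul_comm, zpow_eq_self_of_modEq_one x hsm]
  have hinv' (x : G) : (x ^ s) ^ m = x := by
    rw [← zpow_mul, zpow_eq_self_of_modEq_one x hsm]
  refine Set.InvOn.bijOn (f' := fun b => b ^ s) ⟨fun a _ => hinv a, fun b _ => hinv' b⟩
    (fun a ha => zpow_mem_solutionSet hug hm1 ha) (fun b hb => ?_)
  change b ^ s ∈ solutionSet n u g
  simpa only [hinv] using zpow_mem_solutionSet (Commute.zpow_right hug m) hs hb

theorem stmt_3 {G : Type*} [Group G] [Finite G] (n : ℕ) (hn : 0 < n) (u g : G)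
    (hug : u * g = g * u) (m : ℤ) (hm : Int.gcd m (Nat.card G) = 1)
    (hm1 : m ≡ 1 [ZMOD (n : ℤ)]) :
    Set.BijOn (fun a => a ^ m)
      {a : G | (a * u⁻¹) ^ n = a ^ n ∧ a ^ n = g}
      {a : G | (a * u⁻¹) ^ n = a ^ n ∧ a ^ n = g ^ m} :=
  stmt_3_general n u g hug m hm hm1
end

section
/- Let G be a finite group, n a positive integer, u, g commuting elements of G, and m an integer with gcd(m, |G|) = 1 and m ≡ -1 (mod n). Then |G_n(u, g)| = |G_n(u, gᵐ)|. -/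
theorem stmt_4 {G : Type*} [Group G] [Finite G] (n : ℕ) (hn : 0 < n) (u g : G)
    (hug : u * g = g * u) (m : ℤ) (hm : Int.gcd m (Nat.card G) = 1)
    (hm1 : m ≡ -1 [ZMOD (n : ℤ)]) :
    Nat.card {a : G | (a * u⁻¹) ^ n = a ^ n ∧ a ^ n = g} =
      Nat.card {a : G | (a * u⁻¹) ^ n = a ^ n ∧ a ^ n = g ^ m} := by
  obtain ⟨k, hk⟩ : (n : ℤ) ∣ m + 1 := by
    have h := hm1.dvd
    have h2 : (n:ℤ) ∣ -(m+1) := by convert h using 1; ring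
    exact (dvd_neg).mp h2
  have hug' : Commute u g := hug
  have hcomm : ∀ x : G, Commute x (g ^ m) → Commute x g := by
    intro x h
    have hN : g ^ ((Nat.card G : ℤ)) = 1 := by
      rw [zpow_natCast]; exact pow_card_eq_one'
    have hb := Int.gcd_eq_gcd_ab m (Nat.card G)
    rw [hm] at hb
    have hgj : g ^ (m * Int.gcdA m (Nat.card G)) = g := by
      have he : (m * Int.gcdA m (Nat.card G)) = 1 - (Nat.card G : ℤ) * Int.gcdB m (Nat.card G) := by
        push_cast at hb ⊢; linarith
      rw [he, zpow_sub, zpow_one, zpow_mul, hN, one_zpow, inv_one, mul_one]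
    have h3 := h.zpow_right (Int.gcdA m (Nat.card G))
    rw [← zpow_mul, hgj] at h3
    exact h3
  have hpow : ∀ (c : G) (e : ℤ), Commute c g → c ^ n = g ^ e →
      (c⁻¹ * g ^ k) ^ n = g ^ (n * k - e) := by
    intro c e hc hcn
    have hc' : Commute c⁻¹ (g ^ k) := (hc.zpow_right k).inv_left
    rw [hc'.mul_pow, inv_pow, hcn, ← zpow_natCast (g ^ k), ← zpow_mul,
      ← zpow_neg, ← zpow_add]
    congr 1; ring
  have hmem : ∀ a : G, ((a * u⁻¹) ^ n = a ^ n ∧ a ^ n = g) →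
      ((u * a⁻¹ * g ^ k) * u⁻¹) ^ n = (u * a⁻¹ * g ^ k) ^ n ∧
        (u * a⁻¹ * g ^ k) ^ n = g ^ m := by
    intro a ⟨h1, h2⟩
    have hcg : Commute (a * u⁻¹) g := by
      have h := (Commute.refl (a * u⁻¹)).pow_right n
      rwa [h1, h2] at h
    have hdg : Commute (u * a * u⁻¹) g := by
      have h := (Commute.refl (u * a * u⁻¹)).pow_right n
      rwa [conj_pow, h2, hug'.eq, mul_inv_cancel_right] at h
    have hb1 : (u * a⁻¹ * g ^ k) ^ n = g ^ ((n:ℤ) * k - 1) := by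
      have he : u * a⁻¹ * g ^ k = (a * u⁻¹)⁻¹ * g ^ k := by group
      rw [he, hpow (a * u⁻¹) 1 hcg (by rw [h1, h2, zpow_one])]
    have hswap : g ^ k * u⁻¹ = u⁻¹ * g ^ k := ((hug'.inv_left.zpow_right k).eq).symm
    have hb2 : ((u * a⁻¹ * g ^ k) * u⁻¹) ^ n = g ^ ((n:ℤ) * k - 1) := by
      have he : (u * a⁻¹ * g ^ k) * u⁻¹ = (u * a * u⁻¹)⁻¹ * g ^ k := by
        rw [mul_assoc, hswap]; group
      have hdn : (u * a * u⁻¹) ^ n = g ^ (1:ℤ) := by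
        rw [conj_pow, h2, hug'.eq, mul_inv_cancel_right, zpow_one]
      rw [he, hpow (u * a * u⁻¹) 1 hdg hdn]
    have hm' : (n : ℤ) * k - 1 = m := by linarith
    rw [hb1, hb2, hm']
    exact ⟨rfl, rfl⟩
  have hmem' : ∀ b : G, ((b * u⁻¹) ^ n = b ^ n ∧ b ^ n = g ^ m) →
      ((g ^ k * b⁻¹ * u) * u⁻¹) ^ n = (g ^ k * b⁻¹ * u) ^ n ∧
        (g ^ k * b⁻¹ * u) ^ n = g := by
    intro b ⟨h1, h2⟩
    have hbg : Commute b g := by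
      apply hcomm
      have h := (Commute.refl b).pow_right n
      rwa [h2] at h
    have hconj : (u⁻¹ * b) ^ n = g ^ m := by
      have h4 : u⁻¹ * b = u⁻¹ * (b * u⁻¹) * u⁻¹⁻¹ := by group
      rw [h4, conj_pow, h1, h2, inv_inv, (hug'.inv_left.zpow_right m).eq,
        mul_assoc, inv_mul_cancel, mul_one]
    have heg : Commute (u⁻¹ * b) g := by
      apply hcomm
      have h := (Commute.refl (u⁻¹ * b)).pow_right n
      rwa [hconj] at h
    have hm'' : (n : ℤ) * k - m = 1 := by linarith
    have ha1 : (g ^ k * b⁻¹ * u) ^ n = g := by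
      have hswap : g ^ k * (b⁻¹ * u) = (b⁻¹ * u) * g ^ k :=
        (((hbg.inv_left.mul_left hug').zpow_right k).eq).symm
      have he : g ^ k * b⁻¹ * u = (u⁻¹ * b)⁻¹ * g ^ k := by
        rw [mul_assoc, hswap, mul_inv_rev, inv_inv]
      rw [he, hpow (u⁻¹ * b) m heg hconj, hm'', zpow_one]
    have ha2 : ((g ^ k * b⁻¹ * u) * u⁻¹) ^ n = g := by
      have he : (g ^ k * b⁻¹ * u) * u⁻¹ = b⁻¹ * g ^ k := by
        rw [mul_inv_cancel_right]
        exact (((hbg.zpow_right k).inv_left).eq).symm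
      rw [he, hpow b m hbg h2, hm'', zpow_one]
    exact ⟨ha2.trans ha1.symm, ha1⟩
  apply Nat.card_congr
  refine ⟨fun a => ⟨u * (a : G)⁻¹ * g ^ k, hmem a a.2⟩,
    fun b => ⟨g ^ k * (b : G)⁻¹ * u, hmem' b b.2⟩, ?_, ?_⟩
  · intro a; ext; simp only; group
  · intro b; ext; simp only; group
end

section
/- Let G be a finite group, n a positive integer, and u ∈ G. Suppose the set G_n(u) = {a ∈ G | (a·u⁻¹)ⁿ = aⁿ} is closed under all maps a ↦ aᵐ for integers m with gcd(m, |G|) = 1. Then for every g ∈ G and every m with gcd(m, |G|) = 1, |G_n(u, g)| = |G_n(u, gᵐ)|. -/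
/-! For `m` prime to `|G|`, Bézout makes `a ↦ a ^ m` a bijection of `G` whose inverse is again a
power with exponent prime to `|G|`. Hence it maps `G_n(u)` onto itself, and since
`(a ^ m) ^ n = (a ^ n) ^ m` it carries `G_n(u, g)` onto `G_n(u, g ^ m)`. -/

section CoprimePowers

variable {G : Type*} [Group G] {m : ℤ}

theorem zpow_zpow_gcdA (hm : m.gcd (Nat.card G) = 1) (a : G) :
    (a ^ m) ^ m.gcdA (Nat.card G) = a := by
  have bezout := Int.gcd_eq_gcd_ab m (Nat.card G)
  rw [hm, Nat.cast_one] at bezout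
  calc (a ^ m) ^ m.gcdA (Nat.card G)
      = (a ^ m) ^ m.gcdA (Nat.card G) * (a ^ (Nat.card G : ℤ)) ^ m.gcdB (Nat.card G) := by
        rw [zpow_natCast, pow_card_eq_one', one_zpow, mul_one]
    _ = a := by rw [← zpow_mul, ← zpow_mul, ← zpow_add, ← bezout, zpow_one]

theorem Int.gcd_gcdA_eq_one {x y : ℤ} (h : x.gcd y = 1) : (x.gcdA y).gcd y = 1 := by
  have bezout := Int.gcd_eq_gcd_ab x y
  rw [h, Nat.cast_one] at bezout
  rw [← Int.isCoprime_iff_gcd_eq_one]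
  exact ⟨x, x.gcdB y, by linarith⟩

variable (G) in
noncomputable def zpowCoprime (hm : m.gcd (Nat.card G) = 1) : G ≃ G where
  toFun a := a ^ m
  invFun a := a ^ m.gcdA (Nat.card G)
  left_inv := zpow_zpow_gcdA hm
  right_inv a := (zpow_comm a _ _).trans (zpow_zpow_gcdA hm a)

theorem zpow_left_injective_of_gcd_eq_one (hm : m.gcd (Nat.card G) = 1) :
    Function.Injective (· ^ m : G → G) :=
  (zpowCoprime G hm).injective

theorem card_setOf_pow_eq_zpow (P : G → Prop)
    (hP : ∀ k : ℤ, k.gcd (Nat.card G) = 1 → ∀ a, P a → P (a ^ k)) (n : ℕ) (g : G)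
    (hm : m.gcd (Nat.card G) = 1) :
    Nat.card {a : G | P a ∧ a ^ n = g} = Nat.card {a : G | P a ∧ a ^ n = g ^ m} := by
  refine Nat.card_congr ((zpowCoprime G hm).subtypeEquiv fun a => ?_)
  have hpow : (a ^ m) ^ n = (a ^ n) ^ m := by
    rw [← zpow_natCast, zpow_comm, zpow_natCast]
  have hP_iff : P (a ^ m) ↔ P a :=
    ⟨fun h => zpow_zpow_gcdA hm a ▸ hP _ (Int.gcd_gcdA_eq_one hm) _ h, hP m hm a⟩
  change P a ∧ a ^ n = g ↔ P (a ^ m) ∧ (a ^ m) ^ n = g ^ m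
  rw [hP_iff, hpow, (zpow_left_injective_of_gcd_eq_one hm).eq_iff]

end CoprimePowers

theorem stmt_6_general {G : Type*} [Group G] (n : ℕ) (u : G)
    (hcl : ∀ m : ℤ, Int.gcd m (Nat.card G) = 1 →
      ∀ a : G, (a * u⁻¹) ^ n = a ^ n → (a ^ m * u⁻¹) ^ n = (a ^ m) ^ n) :
    ∀ g : G, ∀ m : ℤ, Int.gcd m (Nat.card G) = 1 →
      Nat.card {a : G | (a * u⁻¹) ^ n = a ^ n ∧ a ^ n = g} =
        Nat.card {a : G | (a * u⁻¹) ^ n = a ^ n ∧ a ^ n = g ^ m} :=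
  fun g _ hm => card_setOf_pow_eq_zpow (fun a => (a * u⁻¹) ^ n = a ^ n) hcl n g hm

theorem stmt_6 {G : Type*} [Group G] [Finite G] (n : ℕ) (hn : 0 < n) (u : G)
    (hcl : ∀ m : ℤ, Int.gcd m (Nat.card G) = 1 →
      ∀ a : G, (a * u⁻¹) ^ n = a ^ n → (a ^ m * u⁻¹) ^ n = (a ^ m) ^ n) :
    ∀ g : G, ∀ m : ℤ, Int.gcd m (Nat.card G) = 1 →
      Nat.card {a : G | (a * u⁻¹) ^ n = a ^ n ∧ a ^ n = g} =
        Nat.card {a : G | (a * u⁻¹) ^ n = a ^ n ∧ a ^ n = g ^ m} :=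
  stmt_6_general n u hcl
end

section
/- Let G be a finite group in which the centralizer of every nonidentity element is abelian (a CA-group), let u ∈ G, n a positive integer, and g ∈ G with g ≠ 1. If a ∈ G satisfies (a·u⁻¹)ⁿ = aⁿ = g, then a commutes with u and uⁿ = 1. -/
/-! If `aⁿ = bⁿ ≠ 1`, both `a` and `b` centralize this power, so by the CA property they
commute. Applied to `b = a u⁻¹`, this makes `a` commute with `u`, and then
`aⁿ = (a u⁻¹)ⁿ = aⁿ u⁻ⁿ` forces `uⁿ = 1`. -/

theorem commute_of_pow_eq_pow_ne_one {G : Type*} [Group G]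
    (hCA : ∀ h : G, h ≠ 1 → ∀ x y : G, x * h = h * x → y * h = h * y → x * y = y * x)
    {a b : G} {n : ℕ} (hab : a ^ n = b ^ n) (hne : a ^ n ≠ 1) : Commute a b :=
  hCA _ hne a b (Commute.self_pow a n).eq (hab ▸ (Commute.self_pow b n).eq)

theorem commute_of_commute_mul_inv {G : Type*} [Group G] {a u : G}
    (h : Commute a (a * u⁻¹)) : Commute a u :=
  Commute.inv_right_iff.mp <| (IsLeftRegular.all a).commute_mul_left_iff.mp h.symm

theorem pow_eq_one_of_mul_inv_pow_eq_pow {G : Type*} [Group G] {a u : G} {n : ℕ}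
    (hau : Commute a u) (h : (a * u⁻¹) ^ n = a ^ n) : u ^ n = 1 := by
  rw [hau.inv_right.mul_pow, mul_eq_left, inv_pow, inv_eq_one] at h
  exact h

theorem stmt_8_general {G : Type*} [Group G]
    (hCA : ∀ h : G, h ≠ 1 → ∀ x y : G, x * h = h * x → y * h = h * y → x * y = y * x)
    (u g : G) (n : ℕ) (hg : g ≠ 1) (a : G)
    (h1 : (a * u⁻¹) ^ n = a ^ n) (h2 : a ^ n = g) :
    a * u = u * a ∧ u ^ n = 1 := by
  have hau : Commute a u :=
    commute_of_commute_mul_inv <| commute_of_pow_eq_pow_ne_one hCA h1.symm (h2 ▸ hg)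
  exact ⟨hau.eq, pow_eq_one_of_mul_inv_pow_eq_pow hau h1⟩

theorem stmt_8 {G : Type*} [Group G] [Finite G]
    (hCA : ∀ h : G, h ≠ 1 → ∀ x y : G, x * h = h * x → y * h = h * y → x * y = y * x)
    (u g : G) (n : ℕ) (hn : 0 < n) (hg : g ≠ 1) (a : G)
    (h1 : (a * u⁻¹) ^ n = a ^ n) (h2 : a ^ n = g) :
    a * u = u * a ∧ u ^ n = 1 :=
  stmt_8_general hCA u g n hg a h1 h2
end

section
/- Let G be a finite group, n a positive integer, u, g commuting elements of G, and suppose a ∈ G satisfies (a·u⁻¹)ⁿ = aⁿ = gᵐ for some integer m coprime to |G|. If t is the order of g, then gcd(t, n) equals o(aⁿ)/o(aⁿ²), the ratio of the order of aⁿ to the order of aⁿ². -/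
theorem stmt_10 {G : Type*} [Group G] [Finite G] (n : ℕ) (hn : 0 < n) (u g : G)
    (hug : u * g = g * u) (m : ℤ) (hm : Int.gcd m (Nat.card G) = 1) (a : G)
    (h1 : (a * u⁻¹) ^ n = a ^ n) (h2 : a ^ n = g ^ m) :
    Nat.gcd (orderOf g) n = orderOf (a ^ n) / orderOf (a ^ (n ^ 2)) := by
  have hdvd : orderOf g ∣ Nat.card G := orderOf_dvd_natCard g
  have hco : (orderOf g).Coprime m.natAbs := by
    have h : Nat.Coprime m.natAbs (Nat.card G) := hm
    exact (h.coprime_dvd_right hdvd).symm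
  have hord : orderOf (a ^ n) = orderOf g := by
    rw [h2]
    rcases Int.natAbs_eq m with h | h
    · rw [h, zpow_natCast, hco.orderOf_pow]
    · rw [h, zpow_neg, zpow_natCast, orderOf_inv, hco.orderOf_pow]
  have h2' : orderOf (a ^ (n ^ 2)) = orderOf g / Nat.gcd (orderOf g) n := by
    rw [pow_two, pow_mul, orderOf_pow, hord]
  rw [h2', hord]
  have hpos : orderOf g ≠ 0 := (orderOf_pos g).ne'
  exact (Nat.div_div_self (Nat.gcd_dvd_left _ _) hpos).symm
end

section
/- Let G be a finite group such that for every a ∈ G, the ratio o(aⁿ)/o(aⁿ²) lies in {1, 2, 3, 4, 6}, where n is a fixed positive integer. Then for all commuting u, g ∈ G and all integers m with gcd(m, |G|) = 1, |G_n(u, g)| = |G_n(u, gᵐ)|. -/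
/-!
If `a ^ n = g`, the hypothesis applied to `a` says that `d = gcd (o(g), n)` lies in
`{1, 2, 3, 4, 6}`, where every unit of `ZMod d` is `±1`. So `m ≡ ±1 (mod d)`, and by Bézout
`g ^ m = (g ^ (1 + t n)) ^ (±1)` for some integer `t`. The injections `a ↦ a * g ^ t`
(from `G_n(u, g)` into `G_n(u, g ^ (1 + t n))`) and `a ↦ u * a⁻¹` (from `G_n(u, h)` into
`G_n(u, h⁻¹)`) give `|G_n(u, g)| ≤ |G_n(u, g ^ m)|`; the reverse inequality is the same statement
for `g ^ m` and an inverse of `m` modulo `|G|`.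
-/

theorem ZMod.eq_one_or_neg_one_of_isUnit {d : ℕ} (hd : d ∈ ({1, 2, 3, 4, 6} : Set ℕ))
    {x : ZMod d} (hx : IsUnit x) : x = 1 ∨ x = -1 := by
  simp only [Set.mem_insert_iff, Set.mem_singleton_iff] at hd
  obtain rfl | rfl | rfl | rfl | rfl := hd <;> revert x <;> decide

theorem Int.modEq_one_or_neg_one_of_isCoprime {d : ℕ} (hd : d ∈ ({1, 2, 3, 4, 6} : Set ℕ))
    {m : ℤ} (hm : IsCoprime m d) : m ≡ 1 [ZMOD d] ∨ m ≡ -1 [ZMOD d] := by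
  have hunit : IsUnit (m : ZMod d) :=
    isCoprime_zero_right.mp (by simpa using hm.map (Int.castRingHom (ZMod d)))
  simpa only [← ZMod.intCast_eq_intCast_iff, Int.cast_one, Int.cast_neg]
    using ZMod.eq_one_or_neg_one_of_isUnit hd hunit

theorem Int.exists_modEq_add_mul_of_modEq_gcd {r n : ℕ} {m c : ℤ}
    (h : m ≡ c [ZMOD (r.gcd n : ℕ)]) : ∃ t : ℤ, m ≡ c + t * n [ZMOD r] := by
  obtain ⟨k, hk⟩ := h.symm.dvd
  have hbezout := Nat.gcd_eq_gcd_ab r n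
  refine ⟨r.gcdB n * k, (Int.modEq_iff_dvd.mpr ⟨r.gcdA n * k, ?_⟩).symm⟩
  linear_combination hk + k * hbezout

theorem orderOf_div_orderOf_pow {G : Type*} [Group G] [Finite G] (g : G) (n : ℕ) :
    orderOf g / orderOf (g ^ n) = (orderOf g).gcd n := by
  rw [orderOf_pow, Nat.div_div_self (Nat.gcd_dvd_left _ _) (orderOf_pos g).ne']

/-- The set `G_n(u, g)`. -/
def powEqSet {G : Type*} [Group G] (n : ℕ) (u g : G) : Set G :=
  {a | (a * u⁻¹) ^ n = a ^ n ∧ a ^ n = g}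

section powEqSet

variable {G : Type*} [Group G] {n : ℕ} {u g a : G}

theorem mul_zpow_mem_powEqSet (hug : Commute u g) (ha : a ∈ powEqSet n u g) (t : ℤ) :
    a * g ^ t ∈ powEqSet n u (g ^ (1 + t * n)) := by
  obtain ⟨hau, hag⟩ := ha
  have hgt : (g ^ t) ^ n = g ^ (t * n) := by rw [← zpow_natCast, ← zpow_mul]
  have ha_gt : Commute a (g ^ t) := by
    rw [← hag]; exact ((Commute.refl a).pow_right n).zpow_right t
  have hau_gt : Commute (a * u⁻¹) (g ^ t) := by
    rw [← hag, ← hau]; exact ((Commute.refl _).pow_right n).zpow_right t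
  have hpow : (a * g ^ t) ^ n = g ^ (1 + t * n) := by
    rw [ha_gt.mul_pow, hag, hgt, zpow_add, zpow_one]
  refine ⟨?_, hpow⟩
  rw [mul_assoc, ((hug.zpow_right t).inv_left).eq.symm, ← mul_assoc, hau_gt.mul_pow, hau,
    ← ha_gt.mul_pow]

theorem mul_inv_mem_powEqSet_inv (hug : Commute u g) (ha : a ∈ powEqSet n u g) :
    u * a⁻¹ ∈ powEqSet n u g⁻¹ := by
  obtain ⟨hau, hag⟩ := ha
  have hpow : (u * a⁻¹) ^ n = g⁻¹ := by
    rw [← inv_inv u, ← mul_inv_rev, inv_pow, hau, hag]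
  refine ⟨?_, hpow⟩
  rw [conj_pow, inv_pow, hag, hpow, hug.inv_right.eq, mul_inv_cancel_right]

theorem card_powEqSet_le_one_add_mul [Finite G] (hug : Commute u g) (t : ℤ) :
    Nat.card (powEqSet n u g) ≤ Nat.card (powEqSet n u (g ^ (1 + t * n))) :=
  Set.ncard_le_ncard_of_injOn (· * g ^ t) (fun _ ha => mul_zpow_mem_powEqSet hug ha t)
    (fun _ _ _ _ h => mul_right_cancel h)

theorem card_powEqSet_le_inv [Finite G] (hug : Commute u g) :
    Nat.card (powEqSet n u g) ≤ Nat.card (powEqSet n u g⁻¹) :=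
  Set.ncard_le_ncard_of_injOn (u * ·⁻¹) (fun _ ha => mul_inv_mem_powEqSet_inv hug ha)
    (fun _ _ _ _ h => inv_injective (mul_left_cancel h))

end powEqSet

theorem card_powEqSet_le_zpow {G : Type*} [Group G] [Finite G] {n : ℕ}
    (hyp : ∀ a : G, orderOf (a ^ n) / orderOf (a ^ (n ^ 2)) ∈ ({1, 2, 3, 4, 6} : Set ℕ))
    {u g : G} (hug : Commute u g) {m : ℤ} (hm : IsCoprime m (Nat.card G)) :
    Nat.card (powEqSet n u g) ≤ Nat.card (powEqSet n u (g ^ m)) := by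
  rcases (powEqSet n u g).eq_empty_or_nonempty with hempty | ⟨a, -, hag⟩
  · simp [hempty]
  have hd : (orderOf g).gcd n ∈ ({1, 2, 3, 4, 6} : Set ℕ) := by
    simpa only [pow_two, pow_mul, hag, orderOf_div_orderOf_pow] using hyp a
  have hmd : IsCoprime m ((orderOf g).gcd n) := hm.of_isCoprime_of_dvd_right <|
    Int.natCast_dvd_natCast.mpr ((Nat.gcd_dvd_left _ _).trans (orderOf_dvd_natCard g))
  rcases Int.modEq_one_or_neg_one_of_isCoprime hd hmd with hm1 | hm1
  · obtain ⟨t, ht⟩ := Int.exists_modEq_add_mul_of_modEq_gcd hm1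
    rw [zpow_eq_zpow_iff_modEq.mpr ht]
    exact card_powEqSet_le_one_add_mul hug t
  · obtain ⟨t, ht⟩ := Int.exists_modEq_add_mul_of_modEq_gcd hm1
    have hgm : g ^ m = (g ^ (1 + -t * n))⁻¹ := by
      rw [zpow_eq_zpow_iff_modEq.mpr ht, ← zpow_neg]
      congr 1
      ring
    rw [hgm]
    exact (card_powEqSet_le_one_add_mul hug (-t)).trans
      (card_powEqSet_le_inv (hug.zpow_right _))

theorem stmt_11_general {G : Type*} [Group G] [Finite G] (n : ℕ)
    (hyp : ∀ a : G, orderOf (a ^ n) / orderOf (a ^ (n ^ 2)) ∈ ({1, 2, 3, 4, 6} : Set ℕ)) :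
    ∀ u g : G, u * g = g * u → ∀ m : ℤ, Int.gcd m (Nat.card G) = 1 →
      Nat.card {a : G | (a * u⁻¹) ^ n = a ^ n ∧ a ^ n = g} =
        Nat.card {a : G | (a * u⁻¹) ^ n = a ^ n ∧ a ^ n = g ^ m} := by
  intro u g (hug : Commute u g) m hm
  have hcop : IsCoprime m (Nat.card G) := Int.isCoprime_iff_gcd_eq_one.mpr hm
  refine le_antisymm (card_powEqSet_le_zpow hyp hug hcop) ?_
  obtain ⟨k, l, hkl⟩ := hcop
  have hgmk : (g ^ m) ^ k = g := by
    rw [← zpow_mul, ← zpow_one g, ← zpow_mul, one_mul, zpow_eq_zpow_iff_modEq]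
    exact (Int.modEq_iff_dvd.mpr ⟨-l, by linear_combination hkl⟩).symm.of_dvd
      (Int.natCast_dvd_natCast.mpr (orderOf_dvd_natCard g))
  have hk : IsCoprime k (Nat.card G) := ⟨m, l, by linear_combination hkl⟩
  have hle := card_powEqSet_le_zpow hyp (hug.zpow_right m) hk
  rwa [hgmk] at hle

theorem stmt_11 {G : Type*} [Group G] [Finite G] (n : ℕ) (hn : 0 < n)
    (hyp : ∀ a : G, orderOf (a ^ n) / orderOf (a ^ (n ^ 2)) ∈ ({1, 2, 3, 4, 6} : Set ℕ)) :
    ∀ u g : G, u * g = g * u → ∀ m : ℤ, Int.gcd m (Nat.card G) = 1 →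
      Nat.card {a : G | (a * u⁻¹) ^ n = a ^ n ∧ a ^ n = g} =
        Nat.card {a : G | (a * u⁻¹) ^ n = a ^ n ∧ a ^ n = g ^ m} :=
  stmt_11_general n hyp
end

section
/- Let n ∈ {1, 2, 3, 4, 6} and G any finite group. Then for all commuting u, g ∈ G and all integers m with gcd(m, |G|) = 1, |G_n(u, g)| = |G_n(u, gᵐ)|. -/
section Aux

variable {G : Type*} [Group G]

lemma aux_conj_pow (x y : G) (j : ℕ) : (x * y * x⁻¹) ^ j = x * y ^ j * x⁻¹ := by
  induction j with
  | zero => simp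
  | succ i ih => rw [pow_succ, pow_succ, ih]; group

/-- Shift bijection: `a ↦ g^k * a`. -/
lemma aux_card_shift (n : ℕ) (u g h : G) (hug : Commute u g) (k : ℤ)
    (hgh : g ^ ((n : ℤ) * k) * g = h) (hc : ∀ c : G, c ^ n = h → Commute g c) :
    Nat.card {a : G | (a * u⁻¹) ^ n = a ^ n ∧ a ^ n = g} =
      Nat.card {a : G | (a * u⁻¹) ^ n = a ^ n ∧ a ^ n = h} := by
  have hpow : ∀ j : ℤ, (g ^ j) ^ n = g ^ ((n : ℤ) * j) := by
    intro j
    rw [← zpow_natCast (g ^ j) n, ← zpow_mul, mul_comm]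
  refine Nat.card_congr (Equiv.ofBijective (fun x => ⟨g ^ k * x.1, ?_⟩) ⟨?_, ?_⟩)
  · obtain ⟨h1, h2⟩ := x.2
    have hga : Commute g x.1 := by
      have := (Commute.refl x.1).pow_right n
      rw [h2] at this
      exact this.symm
    have hgau : Commute g (x.1 * u⁻¹) := hga.mul_right hug.symm.inv_right
    constructor
    · rw [mul_assoc, (hgau.zpow_left k).mul_pow, (hga.zpow_left k).mul_pow, h1]
    · rw [(hga.zpow_left k).mul_pow, h2, hpow, hgh]
  · -- injective
    intro x y hxy
    apply Subtype.ext
    have : g ^ k * x.1 = g ^ k * y.1 := congrArg Subtype.val hxy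
    exact mul_left_cancel this
  · -- surjective
    rintro ⟨c, hc1, hc2⟩
    have hgc : Commute g c := hc c hc2
    have hgcu : Commute g (c * u⁻¹) := hgc.mul_right hug.symm.inv_right
    have e1 : (g ^ (-k) * c) ^ n = g ^ ((n : ℤ) * (-k)) * c ^ n := by
      rw [(hgc.zpow_left (-k)).mul_pow, hpow]
    have hmem : ((g ^ (-k) * c) * u⁻¹) ^ n = (g ^ (-k) * c) ^ n ∧ (g ^ (-k) * c) ^ n = g := by
      constructor
      · rw [mul_assoc, (hgcu.zpow_left (-k)).mul_pow, hc1, e1, hpow]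
      · rw [e1, hc2, ← hgh]
        have h2 : (n : ℤ) * (-k) = -((n : ℤ) * k) := by ring
        rw [h2, zpow_neg]
        group
    refine ⟨⟨g ^ (-k) * c, hmem⟩, ?_⟩
    apply Subtype.ext
    show g ^ k * (g ^ (-k) * c) = c
    rw [← mul_assoc, ← zpow_add]
    simp

/-- Inversion bijection: `a ↦ u * a⁻¹`. -/
lemma aux_card_inv (n : ℕ) (u g : G) (hug : Commute u g) :
    Nat.card {a : G | (a * u⁻¹) ^ n = a ^ n ∧ a ^ n = g} =
      Nat.card {a : G | (a * u⁻¹) ^ n = a ^ n ∧ a ^ n = g⁻¹} := by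
  refine Nat.card_congr (Equiv.ofBijective (fun x => ⟨u * x.1⁻¹, ?_⟩) ⟨?_, ?_⟩)
  · obtain ⟨h1, h2⟩ := x.2
    have key : (u * x.1⁻¹) ^ n = g⁻¹ := by
      have e : u * x.1⁻¹ = (x.1 * u⁻¹)⁻¹ := by group
      rw [e, inv_pow, h1, h2]
    refine ⟨?_, key⟩
    have e2 : u * x.1⁻¹ * u⁻¹ = u * x.1⁻¹ * u⁻¹ := rfl
    calc (u * x.1⁻¹ * u⁻¹) ^ n = u * (x.1⁻¹) ^ n * u⁻¹ := aux_conj_pow u x.1⁻¹ n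
      _ = u * g⁻¹ * u⁻¹ := by rw [inv_pow, h2]
      _ = g⁻¹ := by rw [hug.inv_right.eq]; group
      _ = (u * x.1⁻¹) ^ n := key.symm
  · intro x y hxy
    apply Subtype.ext
    have : u * x.1⁻¹ = u * y.1⁻¹ := congrArg Subtype.val hxy
    exact inv_injective (mul_left_cancel this)
  · rintro ⟨c, hc1, hc2⟩
    have han : (c⁻¹ * u) ^ n = g := by
      have e : c⁻¹ * u = (u⁻¹ * (c * u⁻¹) * u⁻¹⁻¹)⁻¹ := by group
      rw [e, inv_pow, aux_conj_pow, hc1, hc2, hug.inv_inv.eq]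
      group
    have hmem : ((c⁻¹ * u) * u⁻¹) ^ n = (c⁻¹ * u) ^ n ∧ (c⁻¹ * u) ^ n = g := by
      refine ⟨?_, han⟩
      have e : c⁻¹ * u * u⁻¹ = c⁻¹ := by group
      rw [e, inv_pow, hc2, han]
      group
    refine ⟨⟨c⁻¹ * u, hmem⟩, ?_⟩
    apply Subtype.ext
    show u * (c⁻¹ * u)⁻¹ = c
    group

end Aux

lemma aux_arith (n N : ℕ) (hn : n = 1 ∨ n = 2 ∨ n = 3 ∨ n = 4 ∨ n = 6) (m : ℤ)
    (key : ∀ p : ℕ, 1 < p → p ∣ N → ¬ ((p:ℤ) ∣ m)) :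
    ((Nat.gcd n N : ℤ) ∣ m - 1) ∨ ((Nat.gcd n N : ℤ) ∣ m + 1) := by
  have hdn : Nat.gcd n N ∣ n := Nat.gcd_dvd_left n N
  have hdN : Nat.gcd n N ∣ N := Nat.gcd_dvd_right n N
  have hn6 : 0 < n ∧ n ≤ 6 := by rcases hn with rfl|rfl|rfl|rfl|rfl <;> omega
  generalize hdd : Nat.gcd n N = d at hdn hdN ⊢
  have hd1 : 0 < d := Nat.pos_of_dvd_of_pos hdn hn6.1
  have hd6 : d ≤ 6 := le_trans (Nat.le_of_dvd hn6.1 hdn) hn6.2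
  interval_cases d
  · exact Or.inl (one_dvd _)
  · have h2 := key 2 (by norm_num) hdN
    have h : m % 2 = 1 := by omega
    left; omega
  · have h3 := key 3 (by norm_num) hdN
    have h : m % 3 = 1 ∨ m % 3 = 2 := by omega
    rcases h with h | h
    · left; omega
    · right; omega
  · have h2 := key 2 (by norm_num) (dvd_trans (by norm_num) hdN)
    have h : m % 4 = 1 ∨ m % 4 = 3 := by omega
    rcases h with h | h
    · left; omega
    · right; omega
  · exfalso
    rcases hn with rfl|rfl|rfl|rfl|rfl <;> omega
  · have h2 := key 2 (by norm_num) (dvd_trans (by norm_num) hdN)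
    have h3 := key 3 (by norm_num) (dvd_trans (by norm_num) hdN)
    have h : m % 6 = 1 ∨ m % 6 = 5 := by omega
    rcases h with h | h
    · left; omega
    · right; omega

theorem stmt_12 {G : Type*} [Group G] [Finite G] (n : ℕ)
    (hn : n ∈ ({1, 2, 3, 4, 6} : Set ℕ)) :
    ∀ u g : G, u * g = g * u → ∀ m : ℤ, Int.gcd m (Nat.card G) = 1 →
      Nat.card {a : G | (a * u⁻¹) ^ n = a ^ n ∧ a ^ n = g} =
        Nat.card {a : G | (a * u⁻¹) ^ n = a ^ n ∧ a ^ n = g ^ m} := by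
  intro u g hug m hm
  have hug' : Commute u g := hug
  set N := Nat.card G with hN
  have hcop : IsCoprime m (N:ℤ) := Int.isCoprime_iff_gcd_eq_one.mpr hm
  have hgN : ∀ x : G, x ^ ((N:ℕ):ℤ) = 1 := fun x => by
    rw [zpow_natCast]; exact pow_card_eq_one'
  have exists_k : ∀ (x : G) (c : ℤ), ((Nat.gcd n N : ℤ)) ∣ c →
      ∃ k : ℤ, x ^ ((n:ℤ) * k) = x ^ c := by
    intro x c hdvd
    obtain ⟨t, ht⟩ := hdvd
    have hbez : ((Nat.gcd n N : ℤ)) = (n:ℤ) * Int.gcdA n N + (N:ℤ) * Int.gcdB n N := by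
      have h := Int.gcd_eq_gcd_ab (n:ℤ) (N:ℤ)
      rwa [Int.gcd_natCast_natCast] at h
    refine ⟨Int.gcdA n N * t, ?_⟩
    have hc : c = (n:ℤ) * (Int.gcdA n N * t) + (N:ℤ) * (Int.gcdB n N * t) := by
      rw [ht, hbez]; ring
    calc x ^ ((n:ℤ) * (Int.gcdA n N * t))
        = x ^ ((n:ℤ) * (Int.gcdA n N * t)) * (x ^ ((N:ℕ):ℤ)) ^ (Int.gcdB n N * t) := by
          rw [hgN x]; group
      _ = x ^ c := by rw [← zpow_mul, ← zpow_add, ← hc]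
  have hcomm : ∀ c : G, c ^ n = g ^ m → Commute g c := by
    intro c hcn
    have hbez : (1:ℤ) = m * Int.gcdA m N + (N:ℤ) * Int.gcdB m N := by
      have h := Int.gcd_eq_gcd_ab m ((N:ℕ):ℤ)
      rw [hN] at hm ⊢
      rw [show Int.gcd m ((Nat.card G :ℕ):ℤ) = Int.gcd m (Nat.card G) from rfl, hm] at h
      exact_mod_cast h
    have hg : (g ^ m) ^ (Int.gcdA m N) = g := by
      rw [← zpow_mul]
      calc g ^ (m * Int.gcdA m N)
          = g ^ (m * Int.gcdA m N) * (g ^ ((N:ℕ):ℤ)) ^ (Int.gcdB m N) := by rw [hgN g]; group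
        _ = g ^ (1:ℤ) := by rw [← zpow_mul, ← zpow_add, ← hbez]
        _ = g := zpow_one g
    have h1 : Commute c (c ^ n) := (Commute.refl c).pow_right n
    rw [hcn] at h1
    have h2 := h1.zpow_right (Int.gcdA m N)
    rw [hg] at h2
    exact h2.symm
  have hn' : n = 1 ∨ n = 2 ∨ n = 3 ∨ n = 4 ∨ n = 6 := by simpa using hn
  have key : ∀ p : ℕ, 1 < p → p ∣ N → ¬ ((p:ℤ) ∣ m) := by
    intro p hp hpN hpm
    have h1 : (p:ℤ) ∣ (N:ℤ) := Int.natCast_dvd_natCast.mpr hpN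
    have h2 := hcop.isUnit_of_dvd' hpm h1
    rw [Int.isUnit_iff] at h2
    omega
  rcases aux_arith n N hn' m key with hcase | hcase
  · obtain ⟨k, hk⟩ := exists_k g (m - 1) hcase
    refine aux_card_shift n u g (g ^ m) hug' k ?_ hcomm
    rw [hk, ← zpow_add_one, sub_add_cancel]
  · have e1 := aux_card_inv n u g hug'
    obtain ⟨k, hk⟩ := exists_k g⁻¹ (-m - 1) (by
      have h : -m - 1 = -(m + 1) := by ring
      rw [h]; exact dvd_neg.mpr hcase)
    have hsh : (g⁻¹) ^ ((n:ℤ) * k) * g⁻¹ = g ^ m := by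
      rw [hk, inv_zpow, ← zpow_neg, show -(-m - 1) = m + 1 by ring, zpow_add_one]
      group
    have e2 := aux_card_shift n u g⁻¹ (g ^ m) hug'.inv_right k hsh
      (fun c hcn => (hcomm c hcn).inv_left)
    exact e1.trans e2
end

section
/- Let p be a prime, G = Z_p ≀ Z_p = J ⋉ V as above, u⁻¹ = (j^d, t) ∈ G, and g a nonidentity element of the center Z of G (so Z ⊆ V is spanned by the all-ones vector). If k·t ≠ 0 then G_p(u, g) = ∅; if k·t = 0, then |G_p(u, g)| = (p-1)·p^{p-1} when d ≡ 0 (mod p), and |G_p(u, g)| = (p-2)·p^{p-1} otherwise. In particular |G_p(u, g)| is independent of the choice of nonidentity g ∈ Z. -/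
/-- The wreath product `Z_p ≀ Z_p = J ⋉ V` with `V = (ZMod p)^p` (indexed by `ZMod p`)
and `J = ⟨j⟩ ≅ Z_p` acting by cyclically permuting the coordinates.  An element
`(r, x)` represents `(j^r, x)`, and multiplication is
`(j^r, x)(j^s, y) = (j^(r+s), j^s·x + y)` where `(j^s·x) i = x (i + s)`. -/
def Wr (p : ℕ) : Type := ZMod p × (ZMod p → ZMod p)

instance (p : ℕ) : Group (Wr p) where
  mul a b := ⟨a.1 + b.1, fun i => a.2 (i + b.1) + b.2 i⟩
  one := ⟨0, fun _ => 0⟩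
  inv a := ⟨-a.1, fun i => -a.2 (i - a.1)⟩
  mul_assoc a b c := by
    refine Prod.ext ?_ (funext fun i => ?_)
    · exact add_assoc _ _ _
    · show a.2 (i + c.1 + b.1) + b.2 (i + c.1) + c.2 i
        = a.2 (i + (b.1 + c.1)) + (b.2 (i + c.1) + c.2 i)
      rw [add_assoc, add_assoc, add_comm c.1 b.1]
  one_mul a := by
    refine Prod.ext (zero_add _) (funext fun i => ?_)
    show (0 : ZMod p) + a.2 i = a.2 i
    exact zero_add _
  mul_one a := by
    refine Prod.ext (add_zero _) (funext fun i => ?_)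
    show a.2 (i + 0) + 0 = a.2 i
    rw [add_zero, add_zero]
  inv_mul_cancel a := by
    refine Prod.ext (neg_add_cancel _) (funext fun i => ?_)
    show -a.2 (i + a.1 - a.1) + a.2 i = 0
    rw [add_sub_cancel_right, neg_add_cancel]

/-! Write `a = (r, x)`. Its `p`-th power is `1` when `r = 0`, and is the central element
`(∑ x) • 𝟏` when `r ≠ 0`, since then `m ↦ i + m r` runs through all of `ZMod p`. The coordinate
sum is additive on products, so `(a u⁻¹)ᵖ = aᵖ = c • 𝟏` means `r ≠ 0`, `r + d ≠ 0`, `∑ x = c` and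
`∑ t = 0`. The conditions on `r` leave `p - 1` or `p - 2` values according as `d = 0` or not, and
`∑ x = c` determines one coordinate of `x` from the other `p - 1`. -/

open Finset

theorem ZMod.sum_range_natCast {n : ℕ} [NeZero n] {M : Type*} [AddCommMonoid M]
    (f : ZMod n → M) : ∑ m ∈ range n, f m = ∑ x, f x :=
  sum_nbij' (↑) ZMod.val (by simp) (by simp [ZMod.val_lt])
    (fun _ hm => ZMod.val_cast_of_lt (mem_range.1 hm)) (fun x _ => ZMod.natCast_zmod_val x)
    (fun _ _ => rfl)

theorem Nat.card_fun_sum_eq {ι R : Type*} [Fintype ι] [Nonempty ι] [AddCommGroup R] [Finite R]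
    (c : R) : Nat.card {x : ι → R // ∑ i, x i = c} = Nat.card R ^ (Fintype.card ι - 1) := by
  classical
  let i : ι := Classical.arbitrary ι
  let e : {x : ι → R // ∑ i, x i = c} ≃ ({j // j ≠ i} → R) :=
    ((Equiv.funSplitAt i R).subtypeEquiv (q := fun y => y.1 + ∑ j, y.2 j = c) fun x => by
      rw [Fintype.sum_eq_add_sum_subtype_ne x i]; rfl).trans
    { toFun := fun y => y.1.2
      invFun := fun z => ⟨(c - ∑ j, z j, z), sub_add_cancel _ _⟩
      left_inv := fun y => Subtype.ext (Prod.ext (eq_sub_of_add_eq y.2).symm rfl)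
      right_inv := fun _ => rfl }
  rw [Nat.card_congr e, Nat.card_fun, Nat.card_eq_fintype_card (α := {j // j ≠ i}),
    Fintype.card_subtype_compl, Fintype.card_subtype_eq]

theorem Nat.card_ne_zero_and_add_ne_zero {R : Type*} [AddGroup R] [Finite R] {d : R} :
    Nat.card {r : R // r ≠ 0 ∧ r + d ≠ 0} = Nat.card R - ({0, -d} : Set R).ncard := by
  rw [← Set.ncard_compl, ← Nat.card_coe_set_eq]
  congr! 3
  simp [add_eq_zero_iff_eq_neg]

namespace Wr

variable {p : ℕ}

theorem fst_mul (a b : Wr p) : (a * b).1 = a.1 + b.1 := rfl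

theorem snd_mul (a b : Wr p) (i : ZMod p) : (a * b).2 i = a.2 (i + b.1) + b.2 i := rfl

theorem fst_pow (a : Wr p) (n : ℕ) : (a ^ n).1 = n * a.1 := by
  induction n with
  | zero => rw [pow_zero, Nat.cast_zero, zero_mul]; rfl
  | succ n ih => rw [pow_succ, fst_mul, ih]; push_cast; ring

theorem snd_pow (a : Wr p) (n : ℕ) (i : ZMod p) :
    (a ^ n).2 i = ∑ m ∈ range n, a.2 (i + m * a.1) := by
  induction n with
  | zero => rfl
  | succ n ih => rw [pow_succ', snd_mul, ih, fst_pow, sum_range_succ, add_comm]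

theorem fst_pow_modulus (a : Wr p) : (a ^ p).1 = 0 := by
  rw [fst_pow, ZMod.natCast_self, zero_mul]

theorem pow_modulus_of_fst_eq_zero {a : Wr p} (h : a.1 = 0) : a ^ p = 1 := by
  refine Prod.ext (fst_pow_modulus a) (funext fun i => ?_)
  rw [snd_pow, h]
  simp only [mul_zero, add_zero, sum_const, card_range, nsmul_eq_mul, ZMod.natCast_self, zero_mul]
  rfl

theorem snd_pow_modulus_of_isUnit [NeZero p] {a : Wr p} (h : IsUnit a.1) (i : ZMod p) :
    (a ^ p).2 i = ∑ w, a.2 w := by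
  rw [snd_pow, ZMod.sum_range_natCast (fun m => a.2 (i + m * a.1))]
  exact Fintype.sum_equiv ((Units.mulRight h.unit).trans (Equiv.addLeft i)) _ _ fun _ => rfl

theorem sum_snd_mul [NeZero p] (a b : Wr p) : ∑ i, (a * b).2 i = ∑ i, a.2 i + ∑ i, b.2 i := by
  simp only [snd_mul, sum_add_distrib]
  exact congrArg (· + _) (Equiv.sum_comp (Equiv.addRight b.1) a.2)

theorem card_setOf_sum_snd_eq [NeZero p] (P : ZMod p → Prop) (c : ZMod p) :
    Nat.card {a : Wr p | P a.1 ∧ ∑ i, a.2 i = c} = Nat.card {r // P r} * p ^ (p - 1) := by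
  calc _ = Nat.card ({r // P r} × {x : ZMod p → ZMod p // ∑ i, x i = c}) :=
        Nat.card_congr <|
          Equiv.subtypeProdEquivProd (p := P) (q := fun x : ZMod p → ZMod p => ∑ i, x i = c)
    _ = Nat.card {r // P r} * p ^ (p - 1) := by
        rw [Nat.card_prod, Nat.card_fun_sum_eq, Nat.card_zmod, ZMod.card]

theorem pow_prime_eq_iff [NeZero p] (hp : p.Prime) {c : ZMod p} (hc : c ≠ 0) (a : Wr p) :
    a ^ p = ((0, fun _ => c) : Wr p) ↔ a.1 ≠ 0 ∧ ∑ i, a.2 i = c := by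
  have := Fact.mk hp
  by_cases ha : a.1 = 0
  · simp only [pow_modulus_of_fst_eq_zero ha, ha, ne_eq, not_true, false_and, iff_false]
    exact fun h => hc (congrFun (congrArg Prod.snd h) 0).symm
  · have hpow : a ^ p = ((0, fun _ => ∑ i, a.2 i) : Wr p) :=
      Prod.ext (fst_pow_modulus a) (funext (snd_pow_modulus_of_isUnit (Ne.isUnit ha)))
    rw [hpow, and_iff_right ha]
    exact ⟨fun h => congrFun (congrArg Prod.snd h) 0, fun h => by rw [h]⟩

theorem pow_prime_mul_eq_and_pow_prime_eq_iff [NeZero p] (hp : p.Prime) {c : ZMod p} (hc : c ≠ 0)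
    (a b : Wr p) :
    ((a * b) ^ p = a ^ p ∧ a ^ p = ((0, fun _ => c) : Wr p)) ↔
      ((a.1 ≠ 0 ∧ a.1 + b.1 ≠ 0) ∧ ∑ i, a.2 i = c) ∧ ∑ i, b.2 i = 0 := by
  have := Fact.mk hp
  constructor
  · rintro ⟨hab, ha⟩
    obtain ⟨ha₁, ha₂⟩ := (pow_prime_eq_iff hp hc a).1 ha
    obtain ⟨hab₁, hab₂⟩ := (pow_prime_eq_iff hp hc (a * b)).1 (hab.trans ha)
    rw [sum_snd_mul, ha₂, add_eq_left] at hab₂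
    exact ⟨⟨⟨ha₁, hab₁⟩, ha₂⟩, hab₂⟩
  · rintro ⟨⟨⟨ha₁, hab₁⟩, ha₂⟩, hb⟩
    have ha := (pow_prime_eq_iff hp hc a).2 ⟨ha₁, ha₂⟩
    refine ⟨((pow_prime_eq_iff hp hc (a * b)).2 ⟨hab₁, ?_⟩).trans ha.symm, ha⟩
    rw [sum_snd_mul, ha₂, hb, add_zero]

end Wr

/-- in `G = Z_p ≀ Z_p`, for `u⁻¹ = (j^d, t)` and a nonidentity central
element `g = (1, c·𝟏)` (with `c ≠ 0`), the set `G_p(u, g)` is empty if `k·t ≠ 0`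
(i.e. `∑ t ≠ 0`); and if `k·t = 0` it has cardinality `(p-1)·p^(p-1)` when
`d ≡ 0 (mod p)` and `(p-2)·p^(p-1)` otherwise.  In particular `|G_p(u, g)|` does
not depend on the choice of the nonidentity central element `g`. -/
theorem stmt_15 (p : ℕ) (hp : p.Prime) [NeZero p]
    (u : Wr p) (d : ZMod p) (t : ZMod p → ZMod p) (hu : u⁻¹ = ((d, t) : Wr p))
    (c : ZMod p) (hc : c ≠ 0) :
    ((∑ x : ZMod p, t x) ≠ 0 →
      {a : Wr p | (a * u⁻¹) ^ p = a ^ p ∧ a ^ p = ((0, fun _ => c) : Wr p)} = ∅) ∧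
    ((∑ x : ZMod p, t x) = 0 →
      (d = 0 →
        Nat.card {a : Wr p | (a * u⁻¹) ^ p = a ^ p ∧ a ^ p = ((0, fun _ => c) : Wr p)}
          = (p - 1) * p ^ (p - 1)) ∧
      (d ≠ 0 →
        Nat.card {a : Wr p | (a * u⁻¹) ^ p = a ^ p ∧ a ^ p = ((0, fun _ => c) : Wr p)}
          = (p - 2) * p ^ (p - 1))) := by
  have hu₁ : u⁻¹.1 = d := by rw [hu]
  have hu₂ : ∑ i, u⁻¹.2 i = ∑ x, t x := by rw [hu]
  simp_rw [Wr.pow_prime_mul_eq_and_pow_prime_eq_iff hp hc _ u⁻¹, hu₁, hu₂]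
  refine ⟨fun ht => Set.eq_empty_of_forall_notMem fun a ha => ht ha.2, fun ht => ?_⟩
  simp only [ht, and_true]
  rw [Wr.card_setOf_sum_snd_eq (fun r => r ≠ 0 ∧ r + d ≠ 0) c, Nat.card_ne_zero_and_add_ne_zero,
    Nat.card_zmod]
  refine ⟨fun hd => ?_, fun hd => ?_⟩
  · rw [hd, neg_zero, Set.pair_eq_singleton, Set.ncard_singleton]
  · rw [Set.ncard_pair (by simpa [eq_comm] using hd)]
end

section
/- Let G be a finite group and n a positive integer. Suppose that for every h ∈ G whose order does not lie in {1, 2, 3, 4, 6}, the centralizer C(h) satisfies: for all commuting u, g ∈ C(h) and all m with gcd(m, |C(h)|) = 1, the number of a ∈ C(h) with (a·u⁻¹)ⁿ = aⁿ = g equals the number with (a·u⁻¹)ⁿ = aⁿ = gᵐ. Then G itself satisfies the same property: for all commuting u, g ∈ G and all m with gcd(m, |G|) = 1, |G_n(u, g)| = |G_n(u, gᵐ)|. -/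
/-!
Let `d` be the order of `g`. If `d ∈ {1, 2, 3, 4, 6}`, every unit of `ℤ/d` is `±1`, so `gᵐ`
is `g` or `g⁻¹`, and `a ↦ u a⁻¹` maps `G_n(u, g)` bijectively onto `G_n(u, g⁻¹)`.
Otherwise, a solution `a` of `aⁿ = gᵐ` commutes with `gᵐ`, hence with `g`, which is a power
of `gᵐ`. So `G_n(u, g)` and `G_n(u, gᵐ)` lie in the centralizer `C(g)`, which also contains
`u`, and the hypothesis on `C(g)` applies.
-/

open Subgroup

/-- The set `K_n(u, g)`. -/
def fszSet {K : Type*} [Group K] (n : ℕ) (u g : K) : Set K :=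
  {a | (a * u⁻¹) ^ n = a ^ n ∧ a ^ n = g}

lemma Int.gcd_eq_one_of_dvd_right {m : ℤ} {a b : ℕ} (h : m.gcd b = 1) (hab : a ∣ b) :
    m.gcd a = 1 :=
  Nat.eq_one_of_dvd_one (h ▸ Int.gcd_dvd_gcd_of_dvd_right m (Int.natCast_dvd_natCast.mpr hab))

lemma ZMod.units_eq_one_or_neg_one {d : ℕ} (hd : d ∈ ({1, 2, 3, 4, 6} : Set ℕ))
    (x : (ZMod d)ˣ) : x = 1 ∨ x = -1 := by
  rcases hd with rfl | rfl | rfl | rfl | rfl <;> revert x <;> decide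

section

variable {K : Type*} [Group K] {n : ℕ} {u g a : K}

lemma zpow_eq_self_or_inv_of_orderOf_mem {m : ℤ} (hg : orderOf g ∈ ({1, 2, 3, 4, 6} : Set ℕ))
    (hm : m.gcd (orderOf g) = 1) : g ^ m = g ∨ g ^ m = g⁻¹ := by
  have zpow_eq_of_cast_eq (k : ℤ) (hk : (m : ZMod (orderOf g)) = k) : g ^ m = g ^ k :=
    zpow_eq_zpow_iff_modEq.mpr ((ZMod.intCast_eq_intCast_iff _ _ _).mp hk)
  obtain ⟨x, hx⟩ : IsUnit (m : ZMod (orderOf g)) :=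
    (ZMod.coe_int_isUnit_iff_isCoprime _ _).mpr (Int.isCoprime_iff_gcd_eq_one.mpr hm).symm
  rcases ZMod.units_eq_one_or_neg_one hg x with rfl | rfl
  · exact .inl (by simpa using zpow_eq_of_cast_eq 1 (by simpa using hx.symm))
  · exact .inr (by simpa using zpow_eq_of_cast_eq (-1) (by simpa using hx.symm))

lemma Commute.of_zpow_right_of_gcd_orderOf_eq_one {m : ℤ} (h : Commute a (g ^ m))
    (hm : m.gcd (orderOf g) = 1) : Commute a g := by
  obtain ⟨k, hk⟩ := mem_zpowers_iff.mp (mem_zpowers_zpow_iff.mpr hm)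
  exact hk ▸ h.zpow_right k

lemma mem_centralizer_of_pow_eq_zpow {m : ℤ} (hm : m.gcd (orderOf g) = 1) (ha : a ^ n = g ^ m) :
    a ∈ centralizer {g} :=
  mem_centralizer_singleton_iff.mpr
    ((ha ▸ Commute.self_pow a n).of_zpow_right_of_gcd_orderOf_eq_one hm).eq

lemma mem_fszSet_iff : a ∈ fszSet n u g ↔ (a * u⁻¹) ^ n = g ∧ a ^ n = g :=
  ⟨fun ⟨h1, h2⟩ => ⟨h1.trans h2, h2⟩, fun ⟨h1, h2⟩ => ⟨h1.trans h2.symm, h2⟩⟩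

lemma card_fszSet_inv (hug : Commute u g) :
    Nat.card (fszSet n u g) = Nat.card (fszSet n u g⁻¹) := by
  refine Nat.card_congr (((Equiv.inv K).trans (Equiv.mulLeft u)).subtypeEquiv fun a => ?_)
  have hpow : (u * a⁻¹) ^ n = ((a * u⁻¹) ^ n)⁻¹ := by rw [← inv_pow, mul_inv_rev, inv_inv]
  have hconj : (u * a⁻¹ * u⁻¹) ^ n = (u * a ^ n * u⁻¹)⁻¹ := by
    rw [conj_pow, inv_pow, mul_inv_rev, mul_inv_rev, inv_inv, mul_assoc]
  simp only [Equiv.trans_apply, Equiv.inv_apply, Equiv.coe_mulLeft, mem_fszSet_iff, hpow, hconj,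
    inv_inj]
  rw [mul_inv_eq_iff_eq_mul, ← hug.eq, mul_right_inj, and_comm]

lemma card_fszSet_subgroup (H : Subgroup K) (u w : H) (hw : ∀ a : K, a ^ n = w → a ∈ H) :
    Nat.card (fszSet n (u : K) w) = Nat.card (fszSet n u w) := by
  have coe_mem_iff (b : H) : (b : K) ∈ fszSet n (u : K) w ↔ b ∈ fszSet n u w := by
    simp only [fszSet, Set.mem_ofPred_eq, Subtype.ext_iff, coe_mul, coe_pow, coe_inv]
  have himage : fszSet n (u : K) w = Subtype.val '' fszSet n u w := by
    ext a
    refine ⟨fun ha => ⟨⟨a, hw a ha.2⟩, (coe_mem_iff _).mp ha, rfl⟩, ?_⟩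
    rintro ⟨b, hb, rfl⟩
    exact (coe_mem_iff b).mpr hb
  rw [himage, Nat.card_image_of_injective Subtype.val_injective]

end

theorem stmt_16_general {G : Type*} [Group G] (n : ℕ)
    (hyp : ∀ h : G, orderOf h ∉ ({1, 2, 3, 4, 6} : Set ℕ) →
      ∀ u g : Subgroup.centralizer ({h} : Set G), u * g = g * u →
        ∀ m : ℤ, Int.gcd m (Nat.card (Subgroup.centralizer ({h} : Set G))) = 1 →
          Nat.card {a : Subgroup.centralizer ({h} : Set G) |
              (a * u⁻¹) ^ n = a ^ n ∧ a ^ n = g} =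
            Nat.card {a : Subgroup.centralizer ({h} : Set G) |
              (a * u⁻¹) ^ n = a ^ n ∧ a ^ n = g ^ m}) :
    ∀ u g : G, u * g = g * u → ∀ m : ℤ, Int.gcd m (Nat.card G) = 1 →
      Nat.card {a : G | (a * u⁻¹) ^ n = a ^ n ∧ a ^ n = g} =
        Nat.card {a : G | (a * u⁻¹) ^ n = a ^ n ∧ a ^ n = g ^ m} := by
  intro u g hug m hm
  have hmg : m.gcd (orderOf g) = 1 := Int.gcd_eq_one_of_dvd_right hm (orderOf_dvd_natCard g)
  change Nat.card (fszSet n u g) = Nat.card (fszSet n u (g ^ m))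
  by_cases hg : orderOf g ∈ ({1, 2, 3, 4, 6} : Set ℕ)
  · rcases zpow_eq_self_or_inv_of_orderOf_mem hg hmg with h | h <;> rw [h]
    exact card_fszSet_inv hug
  · let u' : centralizer {g} := ⟨u, mem_centralizer_singleton_iff.mpr hug⟩
    let g' : centralizer {g} := ⟨g, mem_centralizer_singleton_iff.mpr rfl⟩
    calc Nat.card (fszSet n u g) = Nat.card (fszSet n u' g') :=
          card_fszSet_subgroup _ u' g' fun a ha =>
            mem_centralizer_of_pow_eq_zpow (m := 1) (by simp) (by simpa using ha)
      _ = Nat.card (fszSet n u' (g' ^ m)) :=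
          hyp g hg u' g' (Subtype.ext hug) m
            (Int.gcd_eq_one_of_dvd_right hm (card_subgroup_dvd_card _))
      _ = Nat.card (fszSet n u (g ^ m)) :=
          (card_fszSet_subgroup _ u' (g' ^ m) fun a ha =>
            mem_centralizer_of_pow_eq_zpow hmg ha).symm

theorem stmt_16 {G : Type*} [Group G] [Finite G] (n : ℕ) (hn : 0 < n)
    (hyp : ∀ h : G, orderOf h ∉ ({1, 2, 3, 4, 6} : Set ℕ) →
      ∀ u g : Subgroup.centralizer ({h} : Set G), u * g = g * u →
        ∀ m : ℤ, Int.gcd m (Nat.card (Subgroup.centralizer ({h} : Set G))) = 1 →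
          Nat.card {a : Subgroup.centralizer ({h} : Set G) |
              (a * u⁻¹) ^ n = a ^ n ∧ a ^ n = g} =
            Nat.card {a : Subgroup.centralizer ({h} : Set G) |
              (a * u⁻¹) ^ n = a ^ n ∧ a ^ n = g ^ m}) :
    ∀ u g : G, u * g = g * u → ∀ m : ℤ, Int.gcd m (Nat.card G) = 1 →
      Nat.card {a : G | (a * u⁻¹) ^ n = a ^ n ∧ a ^ n = g} =
        Nat.card {a : G | (a * u⁻¹) ^ n = a ^ n ∧ a ^ n = g ^ m} :=
  stmt_16_general n hyp
end

section
/- Let G be a finite group such that every element order in G divides 2^α·3^β·q, where q is squarefree and coprime to 6, and either (α ≤ 3 and β ≤ 3) or (α ≤ 5 and β ≤ 1). Then for every a ∈ G and every positive integer n, o(aⁿ)/o(aⁿ²) ∈ {1, 2, 3, 4, 6}. -/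
theorem stmt_18 {G : Type*} [Group G] [Finite G]
    (hyp : ∀ g : G, ∃ α β q : ℕ, Squarefree q ∧ Nat.Coprime q 6 ∧
      ((α ≤ 3 ∧ β ≤ 3) ∨ (α ≤ 5 ∧ β ≤ 1)) ∧ orderOf g ∣ 2 ^ α * 3 ^ β * q) :
    ∀ a : G, ∀ n : ℕ, 0 < n →
      orderOf (a ^ n) / orderOf (a ^ (n ^ 2)) ∈ ({1, 2, 3, 4, 6} : Set ℕ) := by
  intro a n hn
  have hopos : 0 < orderOf a := orderOf_pos a
  set o := orderOf a with ho
  set m := orderOf (a ^ n) with hm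
  have hmpos : 0 < m := orderOf_pos _
  have h1 : a ^ (n ^ 2) = (a ^ n) ^ n := by rw [← pow_mul, sq]
  have h2 : orderOf (a ^ (n ^ 2)) = m / Nat.gcd m n := by rw [h1, orderOf_pow]
  set g := Nat.gcd m n with hg
  have hgm : g ∣ m := Nat.gcd_dvd_left _ _
  have hgpos : 0 < g := Nat.gcd_pos_of_pos_left _ hmpos
  have hratio : m / (m / g) = g := Nat.div_div_self hgm hmpos.ne'
  rw [h2, hratio]
  -- m = o / gcd(o, n) and m ∣ o
  have hmeq : m = o / Nat.gcd o n := by rw [hm, orderOf_pow]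
  have hmo : m ∣ o := by
    rw [hmeq]; exact Nat.div_dvd_of_dvd (Nat.gcd_dvd_left _ _)
  -- g^2 ∣ o
  have hggcd : g ∣ Nat.gcd o n := Nat.dvd_gcd (hgm.trans hmo) (Nat.gcd_dvd_right _ _)
  have hsq : g * g ∣ o := by
    have : m * Nat.gcd o n = o := by
      rw [hmeq]; exact Nat.div_mul_cancel (Nat.gcd_dvd_left _ _)
    rw [← this]; exact mul_dvd_mul hgm hggcd
  obtain ⟨α, β, q, hsf, hcop, hcase, hdvd⟩ := hyp a
  have hqne : q ≠ 0 := hsf.ne_zero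
  have hN : g * g ∣ 2 ^ α * 3 ^ β * q := hsq.trans hdvd
  have hNne : 2 ^ α * 3 ^ β * q ≠ 0 := by positivity
  have hfac : ∀ p : ℕ, 2 * g.factorization p ≤ (2 ^ α * 3 ^ β * q).factorization p := by
    intro p
    have h := (Nat.factorization_le_iff_dvd (by positivity) hNne).mpr hN
    have := h p
    rwa [show g * g = g ^ 2 by ring, Nat.factorization_pow, Finsupp.smul_apply,
      smul_eq_mul] at this
  have hq2 : q.factorization 2 = 0 := by
    apply Nat.factorization_eq_zero_of_not_dvd
    intro h
    have := Nat.Coprime.eq_one_of_dvd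
      ((hcop.coprime_dvd_right (by norm_num : (2:ℕ) ∣ 6)).symm) h
    omega
  have hq3 : q.factorization 3 = 0 := by
    apply Nat.factorization_eq_zero_of_not_dvd
    intro h
    have := Nat.Coprime.eq_one_of_dvd
      ((hcop.coprime_dvd_right (by norm_num : (3:ℕ) ∣ 6)).symm) h
    omega
  have hNfac : ∀ p : ℕ, (2 ^ α * 3 ^ β * q).factorization p
      = α * (Nat.factorization 2 p) + β * (Nat.factorization 3 p) + q.factorization p := by
    intro p
    rw [Nat.factorization_mul (by positivity) hqne,
      Nat.factorization_mul (by positivity) (by positivity),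
      Nat.factorization_pow, Nat.factorization_pow]
    simp
  have hf2 : Nat.factorization 2 = Finsupp.single 2 1 := Nat.Prime.factorization (by norm_num)
  have hf3 : Nat.factorization 3 = Finsupp.single 3 1 := Nat.Prime.factorization (by norm_num)
  -- bound at 2 and 3
  have hb2 : 2 * g.factorization 2 ≤ α := by
    have := hfac 2
    rw [hNfac 2, hf2, hf3] at this
    simp [Finsupp.single_apply, hq2] at this
    omega
  have hb3 : 2 * g.factorization 3 ≤ β := by
    have := hfac 3
    rw [hNfac 3, hf2, hf3] at this
    simp [Finsupp.single_apply, hq3] at this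
    omega
  have hbp : ∀ p : ℕ, p ≠ 2 → p ≠ 3 → g.factorization p = 0 := by
    intro p h2 h3
    have := hfac p
    rw [hNfac p, hf2, hf3] at this
    simp [Finsupp.single_apply, h2.symm, h3.symm] at this
    have hq1 : q.factorization p ≤ 1 := hsf.natFactorization_le_one p
    omega
  -- conclude g ∣ 6 or g ∣ 4
  have hdvd64 : g ∣ 6 ∨ g ∣ 4 := by
    rcases hcase with ⟨ha, hb⟩ | ⟨ha, hb⟩
    · left
      rw [← Nat.factorization_le_iff_dvd hgpos.ne' (by norm_num)]
      intro p
      have h6 : (6 : ℕ).factorization p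
          = (if p = 2 then 1 else 0) + (if p = 3 then 1 else 0) := by
        rw [show (6:ℕ) = 2 * 3 by norm_num, Nat.factorization_mul (by norm_num) (by norm_num),
          hf2, hf3]
        simp [Finsupp.single_apply, eq_comm]
      rw [h6]
      rcases eq_or_ne p 2 with rfl | hp2
      · simp [Finsupp.single_apply]; omega
      rcases eq_or_ne p 3 with rfl | hp3
      · simp [Finsupp.single_apply]; omega
      · simp [Finsupp.single_apply, hp2.symm, hp3.symm, hbp p hp2 hp3]
    · right
      rw [← Nat.factorization_le_iff_dvd hgpos.ne' (by norm_num)]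
      intro p
      have h4 : (4 : ℕ).factorization p = if p = 2 then 2 else 0 := by
        rw [show (4:ℕ) = 2 ^ 2 by norm_num, Nat.factorization_pow, hf2]
        simp [Finsupp.single_apply, eq_comm]
      rw [h4]
      rcases eq_or_ne p 2 with rfl | hp2
      · simp [Finsupp.single_apply]; omega
      rcases eq_or_ne p 3 with rfl | hp3
      · simp [Finsupp.single_apply]; omega
      · simp [Finsupp.single_apply, hp2.symm, hbp p hp2 hp3]
  have hle : g ≤ 6 := by
    rcases hdvd64 with h | h
    · exact Nat.le_of_dvd (by norm_num) h
    · exact (Nat.le_of_dvd (by norm_num) h).trans (by norm_num)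
  simp only [Set.mem_insert_iff, Set.mem_singleton_iff]
  interval_cases g <;> rcases hdvd64 with h | h <;> omega
end
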